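/- arXiv:1207.6365 — 5 statements merged into one kernel-verified Lean document; each statement's English description precedes it below -/
import Mathlib

section
/- (Leverage mass is spread evenly over hash buckets.) For parameters δ_h, T, t > 0 and s = min{i : u_i ≤ T}, set W = T·log(t/δ_h) + r/t. If t ≥ 6·‖u_{s:n}‖₂² / (T²·log(t/δ_h)), then with probability at least 1 − δ_h over the choice of the uniformly random hash function h : [n] → [t], max_{j∈[t]} Σ_{i ≥ s, h(i)=j} u_i ≤ W. -/
open Matrix Finset Real

noncomputable section

/-- Squared Euclidean norm. -/
def sqnorm {ι : Type*} [Fintype ι] (y : ι → ℝ) : ℝ := ∑ i, y i ^ 2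

/-- Leverage scores: squared Euclidean norms of the rows of `U`. -/
def lev {n r : ℕ} (U : Matrix (Fin n) (Fin r) ℝ) (i : Fin n) : ℝ := ∑ k, U i k ^ 2

lemma exp_series_tail (y : ℝ) :
    Real.exp y = 1 + y + ∑' n : ℕ, y ^ (n + 2) / ((n + 2).factorial : ℝ) := by
  have h := Real.summable_pow_div_factorial y
  have h2 := (Summable.sum_add_tsum_nat_add (f := fun n => y ^ n / (n.factorial : ℝ)) 2 h)
  rw [Real.exp_eq_exp_ℝ, NormedSpace.exp_eq_tsum_div]
  show (∑' n : ℕ, y ^ n / (n.factorial : ℝ)) = _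
  rw [← h2]
  simp [Finset.sum_range_succ]

lemma exp_quad {x : ℝ} (h0 : 0 ≤ x) (h2 : x ≤ 2) :
    Real.exp x ≤ 1 + x + (3/2) * x ^ 2 := by
  have hsum2 : Summable (fun n : ℕ => (2:ℝ) ^ (n + 2) / ((n + 2).factorial : ℝ)) :=
    (summable_nat_add_iff (f := fun n : ℕ => (2:ℝ) ^ n / (n.factorial : ℝ)) 2).mpr
      (Real.summable_pow_div_factorial 2)
  have hsumx : Summable (fun n : ℕ => x ^ (n + 2) / ((n + 2).factorial : ℝ)) :=
    (summable_nat_add_iff (f := fun n : ℕ => x ^ n / (n.factorial : ℝ)) 2).mpr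
      (Real.summable_pow_div_factorial x)
  have hsum2' : Summable (fun n : ℕ => x ^ 2 / 4 * ((2:ℝ) ^ (n + 2) / ((n + 2).factorial : ℝ))) :=
    hsum2.mul_left _
  have hterm : ∀ n : ℕ, x ^ (n + 2) / ((n + 2).factorial : ℝ) ≤ x ^ 2 / 4 * ((2:ℝ) ^ (n + 2) / ((n + 2).factorial : ℝ)) := by
    intro n
    have hx : x ^ (n + 2) ≤ x ^ 2 / 4 * 2 ^ (n + 2) := by
      have : x ^ n ≤ 2 ^ n := pow_le_pow_left₀ h0 h2 n
      calc x ^ (n + 2) = x ^ n * x ^ 2 := by ring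
        _ ≤ 2 ^ n * x ^ 2 := by nlinarith [sq_nonneg x]
        _ = x ^ 2 / 4 * 2 ^ (n + 2) := by ring
    calc x ^ (n + 2) / ((n + 2).factorial : ℝ)
        ≤ (x ^ 2 / 4 * 2 ^ (n + 2)) / ((n + 2).factorial : ℝ) := by gcongr
      _ = x ^ 2 / 4 * (2 ^ (n + 2) / ((n + 2).factorial : ℝ)) := by ring
  have htail : ∑' n : ℕ, x ^ (n + 2) / ((n + 2).factorial : ℝ) ≤
      x ^ 2 / 4 * ∑' n : ℕ, (2:ℝ) ^ (n + 2) / ((n + 2).factorial : ℝ) := by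
    rw [← tsum_mul_left]
    exact Summable.tsum_le_tsum hterm hsumx hsum2'
  have h2e : ∑' n : ℕ, (2:ℝ) ^ (n + 2) / ((n + 2).factorial : ℝ) = Real.exp 2 - 3 := by
    have := exp_series_tail 2
    linarith
  have hexp2 : Real.exp 2 ≤ 9 := by
    have h1 : Real.exp 1 ≤ 2.7182818286 := (Real.exp_one_lt_d9).le
    have : Real.exp 2 = Real.exp 1 * Real.exp 1 := by
      rw [← Real.exp_add]; norm_num
    nlinarith [Real.exp_pos 1]
  have := exp_series_tail x
  rw [this]
  rw [h2e] at htail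
  nlinarith [sq_nonneg x]

lemma sum_indicator_filter {n : ℕ} (P : Fin n → Prop) [DecidablePred P] (f : Fin n → ℝ) :
    ∑ i : Fin n, Set.indicator {i : Fin n | P i} f i = ∑ i ∈ univ.filter P, f i := by
  rw [Finset.sum_filter]
  exact Finset.sum_congr rfl fun i _ => by simp [Set.indicator_apply]

set_option maxHeartbeats 1000000 in
/-- **Leverage mass is spread evenly over hash buckets.**
For `W = T·log(t/δ_h) + r/t`, if `t ≥ 6·‖u_{s:n}‖₂²/(T²·log(t/δ_h))` then with
probability at least `1 − δ_h` over the uniformly random hash function `h : [n] → [t]`,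
every bucket `j` has `Σ_{i ≥ s, h(i) = j} u_i ≤ W`. -/
theorem leverage_mass_evenly_hashed
    (n d r t : ℕ) (ht : 0 < t)
    (A : Matrix (Fin n) (Fin d) ℝ) (U : Matrix (Fin n) (Fin r) ℝ)
    (hrank : A.rank = r) (horth : Uᵀ * U = 1)
    (hspan : ∀ y : Fin n → ℝ, y ∈ Set.range A.mulVec ↔ y ∈ Set.range U.mulVec)
    (hord : ∀ i j : Fin n, i ≤ j → lev U j ≤ lev U i)
    (δh T : ℝ) (hδ : 0 < δh) (hT : 0 < T)
    (s : ℕ)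
    (hs1 : ∀ i : Fin n, (i : ℕ) < s → T < lev U i)
    (hs2 : ∀ i : Fin n, s ≤ (i : ℕ) → lev U i ≤ T)
    (W : ℝ) (hW : W = T * Real.log (t / δh) + r / t)
    (hbig : 6 * (∑ i : Fin n,
        Set.indicator {i : Fin n | s ≤ (i : ℕ)} (fun i => lev U i ^ 2) i) /
      (T ^ 2 * Real.log (t / δh)) ≤ t) :
    (1 - δh) * (Fintype.card (Fin n → Fin t)) ≤
      Nat.card {h : Fin n → Fin t //
        ∀ j : Fin t,
          (∑ i : Fin n,
            Set.indicator {i : Fin n | s ≤ (i : ℕ) ∧ h i = j} (lev U) i) ≤ W} := by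
  classical
  -- trivial case δh ≥ 1
  rcases le_or_gt 1 δh with hδ1 | hδ1
  · calc (1 - δh) * (Fintype.card (Fin n → Fin t) : ℝ)
        ≤ 0 := mul_nonpos_of_nonpos_of_nonneg (by linarith) (Nat.cast_nonneg _)
      _ ≤ _ := Nat.cast_nonneg _
  set u : Fin n → ℝ := lev U with hu_def
  have hu0 : ∀ i, 0 ≤ u i := fun i => Finset.sum_nonneg fun k _ => sq_nonneg _
  set L : ℝ := Real.log (t / δh) with hL_def
  have ht1 : (1:ℝ) ≤ t := by exact_mod_cast ht
  have hL : 0 < L := Real.log_pos (by rw [lt_div_iff₀ hδ]; linarith)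
  -- total leverage is r
  have hr : ∑ i, u i = (r : ℝ) := by
    have h1 : ∀ k : Fin r, ∑ i, U i k ^ 2 = 1 := by
      intro k
      have := congrFun (congrFun horth k) k
      rw [Matrix.mul_apply, Matrix.one_apply_eq] at this
      simpa [Matrix.transpose_apply, pow_two] using this
    calc ∑ i, u i = ∑ i, ∑ k, U i k ^ 2 := rfl
      _ = ∑ k, ∑ i, U i k ^ 2 := Finset.sum_comm
      _ = ∑ _k : Fin r, (1:ℝ) := Finset.sum_congr rfl fun k _ => h1 k
      _ = r := by simp
  set Tail : Finset (Fin n) := univ.filter (fun i => s ≤ (i : ℕ)) with hTail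
  set S1 : ℝ := ∑ i ∈ Tail, u i with hS1
  set S2 : ℝ := ∑ i ∈ Tail, u i ^ 2 with hS2
  have hS1r : S1 ≤ r := by
    rw [← hr]
    exact Finset.sum_le_sum_of_subset_of_nonneg (Finset.subset_univ _)
      (fun i _ _ => hu0 i)
  have hS1nn : 0 ≤ S1 := Finset.sum_nonneg fun i _ => hu0 i
  have hS2nn : 0 ≤ S2 := Finset.sum_nonneg fun i _ => sq_nonneg _
  have hS2le : S2 ≤ t * (T ^ 2 * L) / 6 := by
    rw [sum_indicator_filter] at hbig
    have hTL : 0 < T ^ 2 * L := by positivity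
    rw [div_le_iff₀ hTL] at hbig
    rw [hS2, hTail]
    nlinarith
  have huT : ∀ i ∈ Tail, u i ≤ T := by
    intro i hi
    exact hs2 i (by simpa [hTail] using hi)
  set c : ℝ := 2 / T with hc_def
  have hc : 0 < c := by positivity
  -- the load of bucket j
  set load : Fin t → (Fin n → Fin t) → ℝ :=
    fun j h => ∑ i ∈ Tail, (if h i = j then u i else 0) with hload
  have hload_eq : ∀ (h : Fin n → Fin t) (j : Fin t),
      (∑ i : Fin n, Set.indicator {i : Fin n | s ≤ (i : ℕ) ∧ h i = j} (lev U) i)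
        = load j h := by
    intro h j
    rw [sum_indicator_filter (fun i => s ≤ (i:ℕ) ∧ h i = j), hload]
    simp only []
    rw [← Finset.sum_filter (fun i => h i = j) u, hTail, Finset.filter_filter]
  set P : (Fin n → Fin t) → Prop := fun h => ∀ j, load j h ≤ W with hP
  -- identify the RHS cardinality
  have hRHS : (Nat.card {h : Fin n → Fin t //
        ∀ j : Fin t,
          (∑ i : Fin n, Set.indicator {i : Fin n | s ≤ (i : ℕ) ∧ h i = j} (lev U) i) ≤ W}
      : ℝ) = ((univ.filter P).card : ℝ) := by
    rw [Nat.card_eq_fintype_card, Fintype.card_subtype]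
    congr 2
    apply Finset.filter_congr
    intro h _
    simp only [hP]
    constructor
    · intro hh j; rw [← hload_eq h j]; exact hh j
    · intro hh j; rw [hload_eq h j]; exact hh j
  rw [hRHS]
  have hcardfun : (Fintype.card (Fin n → Fin t) : ℝ) = (t : ℝ) ^ n := by
    simp [Fintype.card_fun]
  rw [hcardfun]
  -- per-bucket Chernoff bound
  have ht0 : (0:ℝ) < t := by exact_mod_cast ht
  have hchernoff : ∀ j : Fin t,
      ((univ.filter (fun h : Fin n → Fin t => ¬ load j h ≤ W)).card : ℝ)
        ≤ (t : ℝ) ^ n * (δh / t) := by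
    intro j
    set F : Fin n → Fin t → ℝ := fun i v =>
      if s ≤ (i:ℕ) then Real.exp (c * (if v = j then u i else 0)) else 1 with hF
    have hFnn : ∀ i v, 0 ≤ F i v := by
      intro i v
      rw [hF]
      dsimp only
      split <;> [exact (Real.exp_pos _).le; norm_num]
    have hexp_load : ∀ h : Fin n → Fin t, Real.exp (c * load j h) = ∏ i, F i (h i) := by
      intro h
      rw [hload]
      dsimp only
      rw [Finset.mul_sum, Real.exp_sum, hTail, Finset.prod_filter]
    set B : Finset (Fin n → Fin t) := univ.filter (fun h => ¬ load j h ≤ W) with hB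
    have step1 : (B.card : ℝ) * Real.exp (c * W) ≤ ∑ h : Fin n → Fin t, ∏ i, F i (h i) := by
      calc (B.card : ℝ) * Real.exp (c * W) = ∑ _h ∈ B, Real.exp (c * W) := by
            rw [Finset.sum_const, nsmul_eq_mul]
        _ ≤ ∑ h ∈ B, Real.exp (c * load j h) := by
            refine Finset.sum_le_sum fun h hh => ?_
            apply Real.exp_le_exp.mpr
            have hWl : W < load j h := not_le.mp (Finset.mem_filter.mp hh).2
            nlinarith
        _ = ∑ h ∈ B, ∏ i, F i (h i) := Finset.sum_congr rfl fun h _ => hexp_load h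
        _ ≤ ∑ h : Fin n → Fin t, ∏ i, F i (h i) :=
            Finset.sum_le_sum_of_subset_of_nonneg (Finset.subset_univ _)
              (fun h _ _ => Finset.prod_nonneg fun i _ => hFnn i (h i))
    have step2 : ∑ h : Fin n → Fin t, ∏ i, F i (h i) = ∏ i, ∑ v, F i v := by
      rw [Finset.prod_univ_sum, Fintype.piFinset_univ]
    set g : Fin n → ℝ :=
      fun i => if s ≤ (i:ℕ) then (c * u i + 3/2 * (c * u i) ^ 2) / t else 0 with hg
    have hfac : ∀ i : Fin n, ∑ v, F i v ≤ (t:ℝ) * Real.exp (g i) := by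
      intro i
      by_cases hi : s ≤ (i:ℕ)
      · have hiT : i ∈ Tail := by rw [hTail]; simp [hi]
        have hx0 : 0 ≤ c * u i := mul_nonneg hc.le (hu0 i)
        have hx2 : c * u i ≤ 2 := by
          have := huT i hiT
          rw [hc_def]
          rw [div_mul_eq_mul_div, div_le_iff₀ hT]
          nlinarith
        have hquad := exp_quad hx0 hx2
        have hsum : ∑ v, F i v = (t:ℝ) + (Real.exp (c * u i) - 1) := by
          rw [hF]
          dsimp only
          simp only [if_pos hi]
          have hsw : ∀ v : Fin t, Real.exp (c * if v = j then u i else 0)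
              = (if v = j then Real.exp (c * u i) - 1 else 0) + 1 := by
            intro v
            by_cases hv : v = j <;> simp [hv]
          simp_rw [hsw]
          rw [Finset.sum_add_distrib, Finset.sum_ite_eq' univ j
            (fun _ => Real.exp (c * u i) - 1)]
          simp [Finset.card_univ]
          ring
        rw [hsum, hg]
        dsimp only
        rw [if_pos hi]
        have hexp1 : (c * u i + 3/2 * (c * u i) ^ 2) / t + 1
            ≤ Real.exp ((c * u i + 3/2 * (c * u i) ^ 2) / t) := Real.add_one_le_exp _
        have h3 : (t:ℝ) * ((c * u i + 3/2 * (c * u i) ^ 2) / t + 1)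
            = t + (c * u i + 3/2 * (c * u i) ^ 2) := by field_simp; ring
        have h5 := mul_le_mul_of_nonneg_left hexp1 ht0.le
        rw [h3] at h5
        linarith
      · have hsum : ∑ v, F i v = (t:ℝ) := by
          rw [hF]; dsimp only; simp [hi]
        rw [hsum, hg]
        dsimp only
        rw [if_neg hi]
        simp
    have step3 : ∏ i, ∑ v, F i v ≤ (t:ℝ) ^ n * Real.exp (∑ i, g i) := by
      calc ∏ i, ∑ v, F i v ≤ ∏ i : Fin n, ((t:ℝ) * Real.exp (g i)) :=
            Finset.prod_le_prod (fun i _ => Finset.sum_nonneg fun v _ => hFnn i v)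
              (fun i _ => hfac i)
        _ = (t:ℝ) ^ n * Real.exp (∑ i, g i) := by
            rw [Finset.prod_mul_distrib, Finset.prod_const, Real.exp_sum]
            simp [Finset.card_univ]
    have hgsum : ∑ i, g i = (c * S1 + 3/2 * c ^ 2 * S2) / t := by
      rw [hg]
      dsimp only
      rw [← Finset.sum_filter, ← hTail, hS1, hS2]
      rw [← Finset.sum_div]
      congr 1
      rw [Finset.mul_sum, Finset.mul_sum, ← Finset.sum_add_distrib]
      refine Finset.sum_congr rfl fun i _ => ?_
      ring
    -- exponent bound
    have hcT : c * T = 2 := by rw [hc_def]; field_simp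
    have hexpbound : (c * S1 + 3/2 * c ^ 2 * S2) / t - c * W ≤ -L := by
      have h1 : c * S1 ≤ c * r := mul_le_mul_of_nonneg_left hS1r hc.le
      have hcT2 : c ^ 2 * T ^ 2 = 4 := by nlinarith
      have h2 : 3/2 * c ^ 2 * S2 ≤ t * L := by
        have hm := mul_le_mul_of_nonneg_left hS2le
          (by positivity : (0:ℝ) ≤ 3/2 * c ^ 2)
        calc 3/2 * c ^ 2 * S2 ≤ 3/2 * c ^ 2 * ((t:ℝ) * (T ^ 2 * L) / 6) := hm
          _ = (c ^ 2 * T ^ 2) * ((t:ℝ) * L) / 4 := by ring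
          _ = (t:ℝ) * L := by rw [hcT2]; ring
      have h3 : (c * S1 + 3/2 * c ^ 2 * S2) / t ≤ (c * r + t * L) / t :=
        (div_le_div_iff_of_pos_right ht0).mpr (by linarith)
      have h4 : (c * (r:ℝ) + t * L) / t = c * r / t + L := by field_simp
      have hcW : c * W = 2 * L + c * r / t := by
        rw [hW, mul_add, ← mul_assoc, hcT, mul_div_assoc]
      rw [hcW]
      linarith
    have hexpL : Real.exp (-L) = δh / t := by
      rw [hL_def, Real.exp_neg, Real.exp_log (by positivity : (0:ℝ) < t / δh), inv_div]
    have h5 : (B.card : ℝ) * Real.exp (c * W)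
        ≤ (t:ℝ) ^ n * Real.exp ((c * S1 + 3/2 * c ^ 2 * S2) / t) := by
      rw [← hgsum]
      calc (B.card : ℝ) * Real.exp (c * W) ≤ ∑ h : Fin n → Fin t, ∏ i, F i (h i) := step1
        _ = ∏ i, ∑ v, F i v := step2
        _ ≤ (t:ℝ) ^ n * Real.exp (∑ i, g i) := step3
    calc (B.card : ℝ)
        ≤ (t:ℝ) ^ n * Real.exp ((c * S1 + 3/2 * c ^ 2 * S2) / t) / Real.exp (c * W) :=
          (le_div_iff₀ (Real.exp_pos _)).mpr h5
      _ = (t:ℝ) ^ n * Real.exp ((c * S1 + 3/2 * c ^ 2 * S2) / t - c * W) := by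
          rw [Real.exp_sub]; ring
      _ ≤ (t:ℝ) ^ n * Real.exp (-L) := by
          have := Real.exp_le_exp.mpr hexpbound
          exact mul_le_mul_of_nonneg_left this (by positivity)
      _ = (t:ℝ) ^ n * (δh / t) := by rw [hexpL]

  -- union bound and conclusion
  have hbadsub : (univ.filter (fun h : Fin n → Fin t => ¬ P h)) ⊆
      univ.biUnion (fun j : Fin t => univ.filter (fun h => ¬ load j h ≤ W)) := by
    intro h hh
    simp only [hP, Finset.mem_filter, Finset.mem_univ, true_and, not_forall] at hh
    obtain ⟨j, hj⟩ := hh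
    simp only [Finset.mem_biUnion]
    exact ⟨j, Finset.mem_univ j, by
      simp only [Finset.mem_filter, Finset.mem_univ, true_and]; exact hj⟩
  have hbad : ((univ.filter (fun h : Fin n → Fin t => ¬ P h)).card : ℝ) ≤ δh * (t:ℝ)^n := by
    calc ((univ.filter (fun h : Fin n → Fin t => ¬ P h)).card : ℝ)
        ≤ ((univ.biUnion (fun j : Fin t =>
            univ.filter (fun h => ¬ load j h ≤ W))).card : ℝ) := by
          exact_mod_cast Finset.card_le_card hbadsub
      _ ≤ ∑ j : Fin t, ((univ.filter (fun h : Fin n → Fin t => ¬ load j h ≤ W)).card : ℝ) := by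
          exact_mod_cast Finset.card_biUnion_le
      _ ≤ ∑ _j : Fin t, (t:ℝ)^n * (δh / t) := Finset.sum_le_sum fun j _ => hchernoff j
      _ = δh * (t:ℝ)^n := by
          rw [Finset.sum_const]
          simp only [Finset.card_univ, Fintype.card_fin, nsmul_eq_mul]
          field_simp
  have hsplit : ((univ.filter P).card : ℝ)
      + ((univ.filter (fun h => ¬ P h)).card : ℝ) = (t:ℝ)^n := by
    have hnat := Finset.card_filter_add_card_filter_not
      (s := (univ : Finset (Fin n → Fin t))) (p := P)
    have h2 : (univ : Finset (Fin n → Fin t)).card = t ^ n := by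
      simp [Finset.card_univ, Fintype.card_fun]
    rw [h2] at hnat
    exact_mod_cast hnat
  linarith
end
end

section
/- (Hanson–Wright control of the light part.) There is an absolute constant K_L such that the following holds. Fix any hash function h : [n] → [t] for which the event E_h holds (so max_{j∈[t]} Σ_{i ≥ s, h(i)=j} u_i ≤ W). Then for any unit vector y ∈ C(A) and any ℓ with 2 ≤ ℓ ≤ 1/W, with probability at least 1 − e^{−ℓ} over the random signs D, |‖ΦD y_{s:n}‖₂² − ‖y_{s:n}‖₂²| ≤ K_L·√(W·ℓ). -/
/-!
Write `z = y_{s:n}`, `S_j = Σ_{h(i)=j} σ_i z_i` and `v_j = Σ_{h(i)=j} z_i²`, so that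
`‖ΦDz‖² − ‖z‖² = Σ_j (S_j² − v_j)`. Cauchy–Schwarz gives `y_i² ≤ u_i` for a unit `y ∈ C(A)`,
so the event `E_h` yields `v_j ≤ W` and `Σ_j v_j² ≤ W`.

Averaging out one sign at a time with `cosh x ≤ exp (x²/2)` shows
`E exp (Σ_j κ_j S_j²) ≤ exp (Σ_j (κ_j v_j + 4 κ_j² v_j²))` whenever `4|κ_j| v_j ≤ 1`, for
weights of either sign. Hence `E exp (±θ (‖ΦDz‖² − ‖z‖²)) ≤ exp (4θ²W)`, and a two-sided
Chernoff bound at `θ = ℓ / (4√(Wℓ))` gives the claim with `K_L = 9`.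
-/

open Matrix Finset Real

noncomputable section

/-- `±1` sign value of a Boolean. -/
def sgn (b : Bool) : ℝ := if b then 1 else -1

/-- The sparse embedding matrix `ΦD` determined by a hash function `h : [n] → [t]`
and random signs `σ`. -/
def SE {n t : ℕ} (h : Fin n → Fin t) (σ : Fin n → Bool) :
    Matrix (Fin t) (Fin n) ℝ :=
  fun a j => (if h j = a then (1 : ℝ) else 0) * sgn (σ j)

theorem Fintype.sum_eq_sum_add_sub_of_forall_ne {ι M : Type*} [Fintype ι] [DecidableEq ι]
    [AddCommGroup M] {f g : ι → M} (i : ι) (hfg : ∀ j ≠ i, f j = g j) :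
    ∑ j, f j = ∑ j, g j + (f i - g i) := by
  rw [Fintype.sum_eq_add_sum_compl i f, Fintype.sum_eq_add_sum_compl i g,
    Finset.sum_congr rfl fun j hj => hfg j (by simpa using hj)]
  abel

theorem card_lt_abs_mul_exp_le {Ω : Type*} [Fintype Ω] (f : Ω → ℝ) {θ c : ℝ} (hθ : 0 ≤ θ) :
    #{ω | c < |f ω|} * exp (θ * c) ≤ ∑ ω, exp (θ * f ω) + ∑ ω, exp (-(θ * f ω)) := by
  rw [← Finset.sum_add_distrib, ← nsmul_eq_mul, ← Finset.sum_const]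
  calc ∑ ω ∈ {ω | c < |f ω|}, exp (θ * c)
      ≤ ∑ ω ∈ {ω | c < |f ω|}, (exp (θ * f ω) + exp (-(θ * f ω))) := by
        refine Finset.sum_le_sum fun ω hω => ?_
        have hc : θ * c ≤ θ * |f ω| :=
          mul_le_mul_of_nonneg_left (Finset.mem_filter.1 hω).2.le hθ
        rcases abs_cases (f ω) with ⟨hf, -⟩ | ⟨hf, -⟩ <;> rw [hf] at hc
        · linarith [exp_le_exp.2 hc, exp_pos (-(θ * f ω))]
        · linarith [exp_le_exp.2 (hc.trans_eq (mul_neg θ (f ω))), exp_pos (θ * f ω)]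
    _ ≤ ∑ ω, (exp (θ * f ω) + exp (-(θ * f ω))) :=
        Finset.sum_le_sum_of_subset_of_nonneg (Finset.subset_univ _) fun _ _ _ => by positivity

theorem le_natCard_subtype_of_card_filter_not_le {Ω : Type*} [Fintype Ω] (P : Ω → Prop)
    [DecidablePred P] {δ : ℝ} (hbad : (#{ω | ¬P ω} : ℝ) ≤ δ * Fintype.card Ω) :
    (1 - δ) * Fintype.card Ω ≤ Nat.card {ω // P ω} := by
  have hsplit := Finset.card_filter_add_card_filter_not (s := Finset.univ) fun ω => P ω
  rw [Finset.card_univ] at hsplit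
  rw [Nat.card_eq_fintype_card, Fintype.card_subtype, ← hsplit]
  rw [← hsplit] at hbad
  push_cast at hbad ⊢
  linarith

theorem sum_bool_exp_sgn_le (R k a x : ℝ) :
    ∑ c : Bool, exp (R + k * ((sgn c * a + x) ^ 2 - x ^ 2))
      ≤ 2 * exp (k * a ^ 2) * exp (R + 2 * k ^ 2 * a ^ 2 * x ^ 2) := by
  calc ∑ c : Bool, exp (R + k * ((sgn c * a + x) ^ 2 - x ^ 2))
      = exp (R + k * a ^ 2) * (exp (2 * k * a * x) + exp (-(2 * k * a * x))) := by
        rw [Fintype.sum_bool, mul_add, ← exp_add, ← exp_add]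
        congr 2 <;> simp only [sgn, if_true, Bool.false_eq_true, if_false] <;> ring
    _ ≤ exp (R + k * a ^ 2) * (2 * exp ((2 * k * a * x) ^ 2 / 2)) := by
        gcongr; linarith [cosh_le_exp_half_sq (2 * k * a * x), cosh_eq (2 * k * a * x)]
    _ = 2 * exp (k * a ^ 2) * exp (R + 2 * k ^ 2 * a ^ 2 * x ^ 2) := by
        rw [mul_left_comm, ← exp_add, mul_assoc (2 : ℝ) (exp _), ← exp_add]; congr 2; ring

/-- The bound `log E exp(k S²) ≤ mgfBound k v` for a Rademacher sum `S` of variance `v`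
(valid when `4|k|v ≤ 1`). -/
def mgfBound (k v : ℝ) : ℝ := k * v + 4 * k ^ 2 * v ^ 2

theorem mul_sq_add_mgfBound_le {k a w : ℝ} (hw : 0 ≤ w) (hk : 4 * |k| * (a ^ 2 + w) ≤ 1) :
    k * a ^ 2 + mgfBound (k * (1 + 2 * k * a ^ 2)) w ≤ mgfBound k (a ^ 2 + w) := by
  have ha := sq_nonneg a
  -- The right side minus the left side is `2k²a²` times this factor.
  have hinner : 0 ≤ 2 * a ^ 2 + 3 * w - 4 * k * w ^ 2 * (2 + 2 * k * a ^ 2) := by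
    rcases abs_cases k with ⟨hk', hk0⟩ | ⟨hk', hk0⟩ <;> rw [hk'] at hk
    · have h1 : 0 ≤ 1 - 4 * k * w := by nlinarith
      have h2 : 2 * k * a ^ 2 ≤ 1 / 2 := by nlinarith
      nlinarith [mul_nonneg h1 (mul_nonneg hw (by positivity : (0:ℝ) ≤ 2 + 2 * k * a ^ 2)),
        mul_nonneg (mul_nonneg hk0 hw) hw]
    · have h2 : 0 ≤ 2 + 2 * k * a ^ 2 := by nlinarith
      nlinarith [mul_nonneg (mul_nonneg (neg_nonneg.2 hk0.le) (sq_nonneg w)) h2]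
  unfold mgfBound
  nlinarith [mul_nonneg (mul_nonneg (sq_nonneg k) ha) hinner]

theorem four_mul_abs_update_mul_le_one {k a w : ℝ} (hw : 0 ≤ w)
    (hk : 4 * |k| * (a ^ 2 + w) ≤ 1) : 4 * |k * (1 + 2 * k * a ^ 2)| * w ≤ 1 := by
  have hk0 := abs_nonneg k
  have ha := sq_nonneg a
  have h1 : |1 + 2 * k * a ^ 2| ≤ 1 + 2 * |k| * a ^ 2 := by
    calc _ ≤ |1| + |2 * k * a ^ 2| := abs_add_le _ _
      _ = 1 + 2 * |k| * a ^ 2 := by simp [abs_mul]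
  have h2 : 2 * |k| * w ≤ 1 := by nlinarith
  rw [abs_mul]
  calc 4 * (|k| * |1 + 2 * k * a ^ 2|) * w ≤ 4 * (|k| * (1 + 2 * |k| * a ^ 2)) * w := by gcongr
    _ = 4 * |k| * w + 4 * |k| * a ^ 2 * (2 * |k| * w) := by ring
    _ ≤ 4 * |k| * w + 4 * |k| * a ^ 2 * 1 := by gcongr
    _ ≤ 1 := by linarith

section Update

variable {ι : Type*} [Fintype ι] [DecidableEq ι] (κ : ι → ℝ) (i : ι) (a : ℝ)

theorem sum_bool_exp_sum_mul_sq_single_add_le (X : ι → ℝ) :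
    ∑ c : Bool, exp (∑ j, κ j * (Pi.single i (sgn c * a) + X : ι → ℝ) j ^ 2)
      ≤ 2 * exp (κ i * a ^ 2) *
        exp (∑ j, Function.update κ i (κ i * (1 + 2 * κ i * a ^ 2)) j * X j ^ 2) := by
  have hsingle : ∀ c : Bool, ∑ j, κ j * (Pi.single i (sgn c * a) + X : ι → ℝ) j ^ 2
      = ∑ j, κ j * X j ^ 2 + κ i * ((sgn c * a + X i) ^ 2 - X i ^ 2) := fun c => by
    rw [Fintype.sum_eq_sum_add_sub_of_forall_ne (g := fun j => κ j * X j ^ 2) i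
      fun j hj => by simp [hj]]
    simp only [Pi.add_apply, Pi.single_eq_same]
    ring
  have hupdate : ∑ j, Function.update κ i (κ i * (1 + 2 * κ i * a ^ 2)) j * X j ^ 2
      = ∑ j, κ j * X j ^ 2 + 2 * κ i ^ 2 * a ^ 2 * X i ^ 2 := by
    rw [Fintype.sum_eq_sum_add_sub_of_forall_ne (g := fun j => κ j * X j ^ 2) i
      fun j hj => by simp [hj]]
    simp only [Function.update_self]
    ring
  simp_rw [hsingle, hupdate]
  exact sum_bool_exp_sgn_le _ _ _ _

theorem add_sum_mgfBound_update_le {v : ι → ℝ} (hv : 0 ≤ v i)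
    (hκ : 4 * |κ i| * (a ^ 2 + v i) ≤ 1) :
    κ i * a ^ 2 + ∑ j, mgfBound (Function.update κ i (κ i * (1 + 2 * κ i * a ^ 2)) j) (v j)
      ≤ ∑ j, mgfBound (κ j) ((Pi.single i (a ^ 2) : ι → ℝ) j + v j) := by
  rw [Fintype.sum_eq_sum_add_sub_of_forall_ne (g := fun j => mgfBound (κ j) (v j)) i
      fun j hj => by simp [hj],
    Fintype.sum_eq_sum_add_sub_of_forall_ne
      (f := fun j => mgfBound (κ j) ((Pi.single i (a ^ 2) : ι → ℝ) j + v j))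
      (g := fun j => mgfBound (κ j) (v j)) i fun j hj => by simp [hj]]
  simp only [Function.update_self, Pi.single_eq_same]
  linarith [mul_sq_add_mgfBound_le hv hκ]

end Update

section Buckets

variable {m t : ℕ}

def bucketMass (h : Fin m → Fin t) (z : Fin m → ℝ) (j : Fin t) : ℝ :=
  ∑ i, if h i = j then z i ^ 2 else 0

theorem bucketMass_nonneg (h : Fin m → Fin t) (z : Fin m → ℝ) (j : Fin t) :
    0 ≤ bucketMass h z j :=
  Finset.sum_nonneg fun i _ => by split_ifs <;> positivity

theorem sum_bucketMass (h : Fin m → Fin t) (z : Fin m → ℝ) :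
    ∑ j, bucketMass h z j = sqnorm z := by
  simp only [bucketMass, sqnorm]
  rw [Finset.sum_comm]
  simp

theorem bucketMass_succ (h : Fin (m + 1) → Fin t) (z : Fin (m + 1) → ℝ) :
    bucketMass h z = Pi.single (h 0) (z 0 ^ 2) + bucketMass (h ∘ Fin.succ) (z ∘ Fin.succ) := by
  ext j
  simp [bucketMass, Fin.sum_univ_succ, Pi.single_apply, eq_comm]

theorem bucketMass_indicator_le (h : Fin m → Fin t) (S : Set (Fin m)) {y g : Fin m → ℝ}
    (hyg : ∀ i, y i ^ 2 ≤ g i) (j : Fin t) :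
    bucketMass h (S.indicator y) j ≤ ∑ i, {i | i ∈ S ∧ h i = j}.indicator g i :=
  Finset.sum_le_sum fun i _ => by
    have hg := (sq_nonneg (y i)).trans (hyg i)
    classical
    simp only [Set.indicator_apply]
    split_ifs <;> simp_all

theorem SE_cons_mulVec (h : Fin (m + 1) → Fin t) (c : Bool) (τ : Fin m → Bool)
    (z : Fin (m + 1) → ℝ) :
    SE h (Fin.cons c τ) *ᵥ z
      = Pi.single (h 0) (sgn c * z 0) + SE (h ∘ Fin.succ) τ *ᵥ (z ∘ Fin.succ) := by
  ext j
  simp [SE, mulVec, dotProduct, Fin.sum_univ_succ, Pi.single_apply, eq_comm]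

/- Summing out the first sign turns the weight `κ (h 0)` into `κ (h 0) * (1 + 2 κ (h 0) z₀²)`,
so the induction runs over all weight vectors at once. -/
theorem sum_exp_sum_mul_sq_mulVec_SE_le (h : Fin m → Fin t) (z : Fin m → ℝ) (κ : Fin t → ℝ)
    (hκ : ∀ j, 4 * |κ j| * bucketMass h z j ≤ 1) :
    ∑ σ : Fin m → Bool, exp (∑ j, κ j * (SE h σ *ᵥ z) j ^ 2)
      ≤ 2 ^ m * exp (∑ j, mgfBound (κ j) (bucketMass h z j)) := by
  induction m generalizing κ with
  | zero => simp [bucketMass, SE, mulVec, dotProduct, mgfBound]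
  | succ m ih =>
    set i := h 0
    set a := z 0
    set v := bucketMass (h ∘ Fin.succ) (z ∘ Fin.succ)
    set κ' := Function.update κ i (κ i * (1 + 2 * κ i * a ^ 2))
    have hv : bucketMass h z = Pi.single i (a ^ 2) + v := bucketMass_succ h z
    have hκi : 4 * |κ i| * (a ^ 2 + v i) ≤ 1 := by simpa [hv] using hκ i
    have hκ' : ∀ j, 4 * |κ' j| * v j ≤ 1 := by
      intro j
      rcases eq_or_ne j i with rfl | hj
      · simpa [κ'] using four_mul_abs_update_mul_le_one (bucketMass_nonneg _ _ _) hκi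
      · simpa [κ', hj, hv] using hκ j
    calc ∑ σ : Fin (m + 1) → Bool, exp (∑ j, κ j * (SE h σ *ᵥ z) j ^ 2)
        = ∑ τ : Fin m → Bool, ∑ c : Bool, exp (∑ j, κ j * (SE h (Fin.cons c τ) *ᵥ z) j ^ 2) := by
          rw [← (Fin.consEquiv fun _ => Bool).sum_comp, Fintype.sum_prod_type, Finset.sum_comm]
          rfl
      _ ≤ ∑ τ : Fin m → Bool, 2 * exp (κ i * a ^ 2) *
            exp (∑ j, κ' j * (SE (h ∘ Fin.succ) τ *ᵥ (z ∘ Fin.succ)) j ^ 2) := by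
          gcongr with τ
          simp_rw [SE_cons_mulVec]
          exact sum_bool_exp_sum_mul_sq_single_add_le _ _ _ _
      _ ≤ 2 * exp (κ i * a ^ 2) * (2 ^ m * exp (∑ j, mgfBound (κ' j) (v j))) := by
          rw [← Finset.mul_sum]
          gcongr
          exact ih _ _ _ hκ'
      _ = 2 ^ (m + 1) * exp (κ i * a ^ 2 + ∑ j, mgfBound (κ' j) (v j)) := by
          rw [exp_add]; ring
      _ ≤ _ := by
          simp only [hv, Pi.add_apply]
          gcongr
          exact add_sum_mgfBound_update_le κ i a (bucketMass_nonneg _ _ _) hκi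

theorem sum_exp_mul_deviation_le (h : Fin m → Fin t) (z : Fin m → ℝ) (κ : ℝ)
    (hκ : ∀ j, 4 * |κ| * bucketMass h z j ≤ 1) :
    ∑ σ : Fin m → Bool, exp (κ * (sqnorm (SE h σ *ᵥ z) - sqnorm z))
      ≤ 2 ^ m * exp (4 * κ ^ 2 * ∑ j, bucketMass h z j ^ 2) := by
  have hsplit : ∀ σ, κ * (sqnorm (SE h σ *ᵥ z) - sqnorm z)
      = ∑ j, κ * (SE h σ *ᵥ z) j ^ 2 + -∑ j, κ * bucketMass h z j := fun σ => by
    rw [← sum_bucketMass h z, sqnorm, ← Finset.mul_sum, ← Finset.mul_sum]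
    ring
  calc ∑ σ : Fin m → Bool, exp (κ * (sqnorm (SE h σ *ᵥ z) - sqnorm z))
      = (∑ σ : Fin m → Bool, exp (∑ j, κ * (SE h σ *ᵥ z) j ^ 2)) *
          exp (-∑ j, κ * bucketMass h z j) := by
        simp_rw [hsplit, exp_add, Finset.sum_mul]
    _ ≤ 2 ^ m * exp (∑ j, mgfBound κ (bucketMass h z j)) *
          exp (-∑ j, κ * bucketMass h z j) := by
        gcongr
        exact sum_exp_sum_mul_sq_mulVec_SE_le h z (fun _ => κ) hκ
    _ = 2 ^ m * exp (4 * κ ^ 2 * ∑ j, bucketMass h z j ^ 2) := by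
        rw [mul_assoc, ← exp_add]
        simp only [mgfBound, Finset.sum_add_distrib, Finset.mul_sum]
        ring_nf

theorem sum_exp_mul_deviation_le_of_bucketMass_le {h : Fin m → Fin t}
    {z : Fin m → ℝ} {W κ : ℝ} (hW : 0 ≤ W) (hv : ∀ j, bucketMass h z j ≤ W)
    (hz : sqnorm z ≤ 1) (hκ : 4 * |κ| * W ≤ 1) :
    ∑ σ : Fin m → Bool, exp (κ * (sqnorm (SE h σ *ᵥ z) - sqnorm z))
      ≤ 2 ^ m * exp (4 * κ ^ 2 * W) := by
  have hsq : ∑ j, bucketMass h z j ^ 2 ≤ W := by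
    calc ∑ j, bucketMass h z j ^ 2 ≤ ∑ j, W * bucketMass h z j := by
          gcongr with j
          rw [sq]
          exact mul_le_mul_of_nonneg_right (hv j) (bucketMass_nonneg h z j)
      _ ≤ W := by
          rw [← Finset.mul_sum, sum_bucketMass]
          exact mul_le_of_le_one_right hW hz
  refine (sum_exp_mul_deviation_le h z κ fun j => ?_).trans ?_
  · exact le_trans (by gcongr; exact hv j) hκ
  · gcongr

theorem card_deviation_gt_le {h : Fin m → Fin t} {z : Fin m → ℝ} {W ℓ : ℝ}
    (hW : 0 < W) (hℓ : 1 ≤ ℓ) (hWℓ : W * ℓ ≤ 1) (hv : ∀ j, bucketMass h z j ≤ W)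
    (hz : sqnorm z ≤ 1) :
    (#{σ | 9 * √(W * ℓ) < |sqnorm (SE h σ *ᵥ z) - sqnorm z|} : ℝ) ≤ 2 ^ m * exp (-ℓ) := by
  set ε := √(W * ℓ)
  have hε : 0 < ε := sqrt_pos.2 (by positivity)
  have hε2 : ε ^ 2 = W * ℓ := sq_sqrt (by positivity)
  have hε1 : ε ≤ 1 := sqrt_le_one.2 hWℓ
  -- Chernoff with `θ = ℓ / (4ε)`: then `4θW = ε` and `4θ²W = ℓ/4`.
  set θ := ℓ / (4 * ε) with hθdef
  have hθ : 0 ≤ θ := by positivity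
  have hθW : 4 * θ * W = ε := by rw [hθdef]; field_simp; rw [hε2]; ring
  have hθ2W : 4 * θ ^ 2 * W = ℓ / 4 := by rw [hθdef]; field_simp; rw [hε2]; ring
  have hmgf : ∀ κ, |κ| = θ →
      ∑ σ : Fin m → Bool, exp (κ * (sqnorm (SE h σ *ᵥ z) - sqnorm z)) ≤ 2 ^ m * exp (ℓ / 4) :=
    fun κ hκ => by
      refine (sum_exp_mul_deviation_le_of_bucketMass_le hW.le hv hz ?_).trans_eq ?_
      · rw [hκ, hθW]; exact hε1
      · rw [← sq_abs, hκ, hθ2W]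
  have hmarkov := card_lt_abs_mul_exp_le (fun σ => sqnorm (SE h σ *ᵥ z) - sqnorm z) hθ
    (c := 9 * ε)
  simp_rw [← neg_mul] at hmarkov
  have htwo : 2 ≤ exp ℓ := by linarith [add_one_le_exp ℓ]
  have hθε : θ * (9 * ε) = ℓ / 4 + 2 * ℓ := by rw [hθdef]; field_simp; ring
  rw [hθε, exp_add] at hmarkov
  have hsum := add_le_add (hmgf θ (abs_of_nonneg hθ))
    (hmgf (-θ) (by rw [abs_neg, abs_of_nonneg hθ]))
  have hcount : (#{σ | 9 * ε < |sqnorm (SE h σ *ᵥ z) - sqnorm z|} : ℝ) * exp (2 * ℓ)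
      ≤ 2 * 2 ^ m := by
    have := hmarkov.trans hsum
    nlinarith [exp_pos (ℓ / 4)]
  rw [show exp (2 * ℓ) = exp ℓ * exp ℓ by rw [← exp_add]; ring_nf] at hcount
  rw [Real.exp_neg, le_mul_inv_iff₀ (exp_pos ℓ)]
  nlinarith [exp_pos ℓ, pow_pos (two_pos : (0 : ℝ) < 2) m]

end Buckets

theorem sqnorm_eq_dotProduct {m : ℕ} (y : Fin m → ℝ) : sqnorm y = y ⬝ᵥ y := by
  simp [sqnorm, dotProduct, sq]

theorem sqnorm_mulVec_of_transpose_mul_self_eq_one {n r : ℕ} {U : Matrix (Fin n) (Fin r) ℝ}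
    (hU : Uᵀ * U = 1) (c : Fin r → ℝ) : sqnorm (U *ᵥ c) = sqnorm c := by
  rw [sqnorm_eq_dotProduct, sqnorm_eq_dotProduct, dotProduct_mulVec, ← mulVec_transpose,
    mulVec_mulVec, hU, one_mulVec]

theorem sq_mulVec_apply_le_lev_mul_sqnorm {n r : ℕ} (U : Matrix (Fin n) (Fin r) ℝ)
    (c : Fin r → ℝ) (i : Fin n) : (U *ᵥ c) i ^ 2 ≤ lev U i * sqnorm c :=
  Finset.sum_mul_sq_le_sq_mul_sq Finset.univ (U i) c

theorem sqnorm_indicator_le {m : ℕ} (S : Set (Fin m)) (y : Fin m → ℝ) :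
    sqnorm (S.indicator y) ≤ sqnorm y :=
  Finset.sum_le_sum fun i _ => by
    by_cases hi : i ∈ S <;> simp [hi, sq_nonneg]

/-- **Hanson–Wright control of the light part.** There is an absolute constant `K_L`
such that: for any hash function `h` satisfying the event `E_h`, any unit vector
`y ∈ C(A)` and any `2 ≤ ℓ ≤ 1/W`, with probability at least `1 − e^{−ℓ}` over the
random signs, `|‖ΦD y_{s:n}‖₂² − ‖y_{s:n}‖₂²| ≤ K_L·√(W·ℓ)`. -/
theorem hanson_wright_light_part :
    ∃ KL : ℝ, 0 < KL ∧
    ∀ (n d r t : ℕ) (A : Matrix (Fin n) (Fin d) ℝ) (U : Matrix (Fin n) (Fin r) ℝ),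
      A.rank = r → Uᵀ * U = 1 →
      (∀ y : Fin n → ℝ, y ∈ Set.range A.mulVec ↔ y ∈ Set.range U.mulVec) →
      (∀ i j : Fin n, i ≤ j → lev U j ≤ lev U i) →
    ∀ (δh T : ℝ), 0 < δh → 0 < T →
    ∀ s : ℕ,
      (∀ i : Fin n, (i : ℕ) < s → T < lev U i) →
      (∀ i : Fin n, s ≤ (i : ℕ) → lev U i ≤ T) →
    ∀ W : ℝ, W = T * Real.log (t / δh) + r / t →
    ∀ h : Fin n → Fin t,
      (∀ j : Fin t,
        (∑ i : Fin n,
          Set.indicator {i : Fin n | s ≤ (i : ℕ) ∧ h i = j} (lev U) i) ≤ W) →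
    ∀ y : Fin n → ℝ, y ∈ Set.range A.mulVec → sqnorm y = 1 →
    ∀ ℓ : ℝ, 2 ≤ ℓ → ℓ ≤ 1 / W →
    (1 - Real.exp (-ℓ)) * (Fintype.card (Fin n → Bool)) ≤
      Nat.card {σ : Fin n → Bool //
        |sqnorm ((SE h σ).mulVec (Set.indicator {i : Fin n | s ≤ (i : ℕ)} y)) -
            sqnorm (Set.indicator {i : Fin n | s ≤ (i : ℕ)} y)| ≤
          KL * Real.sqrt (W * ℓ)} := by
  refine ⟨9, by norm_num, ?_⟩
  intro n d r t A U _ hU hrange _ δh T _ _ s _ _ W _ h hEh y hy hy1 ℓ hℓ hℓW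
  have hW : 0 < W := by
    by_contra! hW
    linarith [one_div_nonpos.2 hW]
  obtain ⟨c, rfl⟩ := (hrange y).1 hy
  have hlev : ∀ i, (U *ᵥ c) i ^ 2 ≤ lev U i := fun i => by
    simpa [← sqnorm_mulVec_of_transpose_mul_self_eq_one hU c, hy1]
      using sq_mulVec_apply_le_lev_mul_sqnorm U c i
  refine le_natCard_subtype_of_card_filter_not_le _ ?_
  simp_rw [not_le, Fintype.card_fun, Fintype.card_bool, Fintype.card_fin, Nat.cast_pow,
    Nat.cast_ofNat, mul_comm (exp (-ℓ))]
  exact card_deviation_gt_le hW (by linarith) (by rwa [le_div_iff₀ hW, mul_comm] at hℓW)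
    (fun j => (bucketMass_indicator_le h _ hlev j).trans (hEh j))
    ((sqnorm_indicator_le _ _).trans hy1.le)
end
end

section
/- (Perfect hashing of the heavy coordinates.) Let E_B denote the event that h(i) ≠ h(i') for all distinct i, i' < s. Then Pr[E_B] ≥ 1 − s²/t. Moreover, on the event E_B, for every y ∈ ℝⁿ one has ‖ΦD y_{1:(s−1)}‖₂² = ‖y_{1:(s−1)}‖₂². -/
open Matrix Finset Real

noncomputable section

open Classical in
/-- Counting functions with a collision at a fixed pair of distinct indices. -/
lemma collide_card_le (n t : ℕ) (i j : Fin n) (hij : i ≠ j) :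
    ((Finset.univ : Finset (Fin n → Fin t)).filter (fun h => h i = h j)).card
      ≤ t ^ (n - 1) := by
  classical
  have hcard : Fintype.card ({k : Fin n // k ≠ j} → Fin t) = t ^ (n - 1) := by
    rw [Fintype.card_fun, Fintype.card_fin]
    congr 1
    rw [Fintype.card_subtype]
    simp [Finset.filter_ne', Finset.card_erase_of_mem]
  calc ((Finset.univ : Finset (Fin n → Fin t)).filter (fun h => h i = h j)).card
      ≤ (Finset.univ : Finset ({k : Fin n // k ≠ j} → Fin t)).card := by
        apply Finset.card_le_card_of_injOn (fun h => fun k => h k.1)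
          (fun _ _ => Finset.mem_univ _)
        intro h1 m1 h2 m2 heq
        simp only [Finset.mem_coe, Finset.mem_filter] at m1 m2
        funext k
        by_cases hk : k = j
        · subst hk
          have e1 : h1 i = h2 i := congrFun heq ⟨i, hij⟩
          rw [← m1.2, e1, m2.2]
        · exact congrFun heq ⟨k, hk⟩
    _ = t ^ (n - 1) := by rw [Finset.card_univ, hcard]

open Classical in
/-- The number of hash functions that fail to be injective on the heavy set. -/
lemma bad_card_le (n t s : ℕ) :
    ((Finset.univ : Finset (Fin n → Fin t)).filter
        (fun h => ¬ Set.InjOn h {i : Fin n | (i : ℕ) < s})).card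
      ≤ s ^ 2 * t ^ (n - 1) := by
  classical
  set P : Finset (Fin n × Fin n) :=
    (Finset.univ ×ˢ Finset.univ).filter
      (fun p => (p.1 : ℕ) < s ∧ (p.2 : ℕ) < s ∧ p.1 ≠ p.2) with hP
  set B : Finset (Fin n → Fin t) :=
    P.biUnion (fun p => Finset.univ.filter (fun h : Fin n → Fin t => h p.1 = h p.2)) with hB
  have hsub : ((Finset.univ : Finset (Fin n → Fin t)).filter
        (fun h => ¬ Set.InjOn h {i : Fin n | (i : ℕ) < s})) ⊆ B := by
    intro h hh
    simp only [Finset.mem_filter, Finset.mem_univ, true_and] at hh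
    rw [Set.InjOn] at hh
    push_neg at hh
    obtain ⟨i, hi, j, hj, hij, hne⟩ := hh
    simp only [Set.mem_setOf_eq] at hi hj
    refine Finset.mem_biUnion.2 ⟨⟨i, j⟩, ?_, ?_⟩
    · simp [hP, hi, hj, hne]
    · simp [hij]
  have hPcard : P.card ≤ s ^ 2 := by
    rcases Nat.eq_zero_or_pos s with hs0 | hs0
    · have : P = ∅ := by
        ext p
        simp [hP, hs0]
      simp [this]
    · calc P.card ≤ (Finset.univ : Finset (Fin s × Fin s)).card := by
            apply Finset.card_le_card_of_injOn
              (fun p => (⟨p.1 % s, Nat.mod_lt _ hs0⟩, ⟨p.2 % s, Nat.mod_lt _ hs0⟩))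
              (fun _ _ => Finset.mem_univ _)
            intro p hp q hq heq
            simp only [Finset.mem_coe, hP, Finset.mem_filter] at hp hq
            have e1 := congrArg (fun z : Fin s × Fin s => (z.1 : ℕ)) heq
            have e2 := congrArg (fun z : Fin s × Fin s => (z.2 : ℕ)) heq
            simp only [Nat.mod_eq_of_lt hp.2.1, Nat.mod_eq_of_lt hq.2.1,
              Nat.mod_eq_of_lt hp.2.2.1, Nat.mod_eq_of_lt hq.2.2.1] at e1 e2
            exact Prod.ext (Fin.ext e1) (Fin.ext e2)
        _ = s ^ 2 := by simp [sq]
  have hBcard : B.card ≤ s ^ 2 * t ^ (n - 1) := by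
    calc B.card
        ≤ ∑ p ∈ P, (Finset.univ.filter (fun h : Fin n → Fin t => h p.1 = h p.2)).card :=
          Finset.card_biUnion_le
      _ ≤ ∑ _p ∈ P, t ^ (n - 1) := by
          apply Finset.sum_le_sum
          intro p hp
          simp only [hP, Finset.mem_filter] at hp
          exact collide_card_le n t p.1 p.2 hp.2.2.2
      _ = P.card * t ^ (n - 1) := by rw [Finset.sum_const, smul_eq_mul]
      _ ≤ s ^ 2 * t ^ (n - 1) := Nat.mul_le_mul_right _ hPcard
  exact le_trans (Finset.card_le_card hsub) hBcard

/-- **Perfect hashing of the heavy coordinates.** The event `E_B` that `h` is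
injective on the heavy coordinates (those with individual index below `s`) has
probability at least `1 − s²/t`; on `E_B`, the sparse embedding exactly preserves
the squared norm of the heavy part of any vector. -/
theorem perfect_hashing_heavy_coordinates
    (n d r t : ℕ)
    (A : Matrix (Fin n) (Fin d) ℝ) (U : Matrix (Fin n) (Fin r) ℝ)
    (hrank : A.rank = r) (horth : Uᵀ * U = 1)
    (hspan : ∀ y : Fin n → ℝ, y ∈ Set.range A.mulVec ↔ y ∈ Set.range U.mulVec)
    (hord : ∀ i j : Fin n, i ≤ j → lev U j ≤ lev U i)
    (T : ℝ) (hT : 0 < T)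
    (s : ℕ)
    (hs1 : ∀ i : Fin n, (i : ℕ) < s → T < lev U i)
    (hs2 : ∀ i : Fin n, s ≤ (i : ℕ) → lev U i ≤ T) :
    (1 - (s : ℝ) ^ 2 / t) * (Fintype.card (Fin n → Fin t)) ≤
      Nat.card {h : Fin n → Fin t // Set.InjOn h {i : Fin n | (i : ℕ) < s}}
    ∧ ∀ h : Fin n → Fin t, Set.InjOn h {i : Fin n | (i : ℕ) < s} →
        ∀ (σ : Fin n → Bool) (y : Fin n → ℝ),
          sqnorm ((SE h σ).mulVec (Set.indicator {i : Fin n | (i : ℕ) < s} y)) =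
            sqnorm (Set.indicator {i : Fin n | (i : ℕ) < s} y) := by
  classical
  constructor
  · -- probability bound
    set good := (Finset.univ : Finset (Fin n → Fin t)).filter
      (fun h => Set.InjOn h {i : Fin n | (i : ℕ) < s}) with hgood
    set bad := (Finset.univ : Finset (Fin n → Fin t)).filter
      (fun h => ¬ Set.InjOn h {i : Fin n | (i : ℕ) < s}) with hbad
    have hGcard : Nat.card {h : Fin n → Fin t // Set.InjOn h {i : Fin n | (i : ℕ) < s}}
        = good.card := by
      rw [Nat.card_eq_fintype_card, Fintype.card_subtype]
    have hsplit : good.card + bad.card = Fintype.card (Fin n → Fin t) := by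
      rw [hgood, hbad, Finset.card_filter_add_card_filter_not, Finset.card_univ]
    have hB : bad.card ≤ s ^ 2 * t ^ (n - 1) := bad_card_le n t s
    have hcardfun : Fintype.card (Fin n → Fin t) = t ^ n := by
      rw [Fintype.card_fun, Fintype.card_fin, Fintype.card_fin]
    rw [hGcard]
    rcases Nat.eq_zero_or_pos n with hn0 | hn0
    · -- n = 0 : every function is injective on the (sub-singleton-domain) set
      subst hn0
      have hbade : bad = ∅ := by
        rw [hbad]
        apply Finset.filter_false_of_mem
        intro h _
        simp only [not_not]
        intro a _ b _ _
        exact Subsingleton.elim a b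
      have hge : (good.card : ℝ) = Fintype.card (Fin 0 → Fin t) := by
        rw [← hsplit, hbade]
        simp
      rw [← hge]
      have h1 : (0:ℝ) ≤ (s : ℝ) ^ 2 / t := by positivity
      nlinarith [Nat.cast_nonneg (α := ℝ) good.card]
    rcases Nat.eq_zero_or_pos t with ht0 | ht0
    · -- t = 0, n > 0 : no functions at all
      subst ht0
      have : Fintype.card (Fin n → Fin 0) = 0 := by
        rw [hcardfun, Nat.zero_pow hn0]
      rw [this]
      simp
    · -- main case : t ≥ 1, n ≥ 1
      have hBr : (bad.card : ℝ) ≤ (s : ℝ) ^ 2 * (t : ℝ) ^ (n - 1) := by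
        calc (bad.card : ℝ) ≤ ((s ^ 2 * t ^ (n - 1) : ℕ) : ℝ) := by exact_mod_cast hB
          _ = (s : ℝ) ^ 2 * (t : ℝ) ^ (n - 1) := by push_cast; ring
      have htpos : (0:ℝ) < t := by exact_mod_cast ht0
      have hpow : (t : ℝ) ^ n = t * (t : ℝ) ^ (n - 1) := by
        conv_lhs => rw [show n = (n - 1) + 1 from (Nat.succ_pred_eq_of_pos hn0).symm]
        rw [pow_succ]
        ring
      have hGr : (good.card : ℝ) = (t : ℝ) ^ n - bad.card := by
        have := congrArg (fun m : ℕ => (m : ℝ)) hsplit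
        push_cast at this
        rw [hcardfun] at this
        push_cast at this
        linarith
      rw [hcardfun]
      push_cast
      rw [hGr]
      have : (s : ℝ) ^ 2 / t * (t : ℝ) ^ n = (s : ℝ) ^ 2 * (t : ℝ) ^ (n - 1) := by
        rw [hpow]
        field_simp
      nlinarith
  · -- exact norm preservation on the event E_B
    intro h hinj σ y
    set S : Set (Fin n) := {i : Fin n | (i : ℕ) < s} with hS
    set x : Fin n → ℝ := Set.indicator S y with hx
    have hx0 : ∀ j, j ∉ S → x j = 0 := fun j hj => Set.indicator_of_notMem hj y
    have hsgn : ∀ b, sgn b ^ 2 = 1 := by intro b; cases b <;> simp [sgn]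
    have key : ∀ j k : Fin n,
        ∑ a : Fin t, (if h j = a then (1:ℝ) else 0) * (if h k = a then 1 else 0)
          = if h j = h k then 1 else 0 := by
      intro j k
      by_cases hjk : h j = h k
      · rw [if_pos hjk, hjk]
        calc ∑ a : Fin t, (if h k = a then (1:ℝ) else 0) * (if h k = a then 1 else 0)
            = ∑ a : Fin t, (if h k = a then (1:ℝ) else 0) :=
              Finset.sum_congr rfl (fun a _ => by by_cases ha : h k = a <;> simp [ha])
          _ = 1 := by simp
      · rw [if_neg hjk]
        apply Finset.sum_eq_zero
        intro a _
        by_cases h1 : h j = a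
        · have h2 : h k ≠ a := fun e => hjk (h1.trans e.symm)
          simp [h1, h2]
        · simp [h1]
    have expand : ∀ a : Fin t,
        (∑ j, (if h j = a then (1:ℝ) else 0) * sgn (σ j) * x j) ^ 2
          = ∑ j, ∑ k, ((if h j = a then (1:ℝ) else 0) * (if h k = a then 1 else 0))
              * ((sgn (σ j) * x j) * (sgn (σ k) * x k)) := by
      intro a
      rw [sq, Finset.sum_mul_sum]
      exact Finset.sum_congr rfl fun j _ => Finset.sum_congr rfl fun k _ => by ring
    have lhs_eq : sqnorm ((SE h σ).mulVec x)
        = ∑ j, ∑ k, (if h j = h k then (1:ℝ) else 0)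
            * ((sgn (σ j) * x j) * (sgn (σ k) * x k)) := by
      simp only [sqnorm, Matrix.mulVec, dotProduct, SE]
      rw [Finset.sum_congr rfl fun a _ => expand a]
      rw [Finset.sum_comm]
      refine Finset.sum_congr rfl fun j _ => ?_
      rw [Finset.sum_comm]
      refine Finset.sum_congr rfl fun k _ => ?_
      rw [← Finset.sum_mul, key j k]
    rw [lhs_eq]
    unfold sqnorm
    refine Finset.sum_congr rfl fun j _ => ?_
    rw [Finset.sum_eq_single j]
    · simp only [if_pos rfl, one_mul]
      have : sgn (σ j) * x j * (sgn (σ j) * x j) = sgn (σ j) ^ 2 * x j ^ 2 := by ring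
      rw [this, hsgn, one_mul]
      simp
    · intro k _ hkj
      by_cases hjS : j ∈ S
      · by_cases hkS : k ∈ S
        · have : h j ≠ h k := fun e => hkj (hinj hjS hkS e).symm
          simp [this]
        · simp [hx0 k hkS]
      · simp [hx0 j hjS]
    · intro hj
      exact absurd (Finset.mem_univ j) hj
end
end

section
/- (Cross-term bound.) There is an absolute constant K_C such that the following holds. Fix any hash function h : [n] → [t] for which the events E_h and E_B both hold. Then for any unit vector y ∈ C(A) and any δ_C ∈ (0, 1/e], with probability at least 1 − δ_C over the random signs D, |y_{1:(s−1)}ᵀ D Φᵀ Φ D y_{s:n}| ≤ K_C·√(W·log(1/δ_C)), where W = T·log(t/δ_h) + r/t. -/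
open Matrix Finset Real

noncomputable section

/-!
Because `h` is injective on the heavy coordinates, each light coordinate `j` collides with at most
one heavy coordinate `p j`, so the cross term equals `∑ⱼ cⱼ σⱼ σ_{p j}` with `cⱼ = y_j y_{p j}`.
Replacing `σⱼ` by `σⱼ σ_{p j}` for the light `j` is an involution of the sign vectors, which turns
the cross term into the Rademacher sum `∑ⱼ cⱼ σⱼ`. Its variance is at most `W`: grouping the light
`j` by their partner, `∑ⱼ cⱼ² ≤ ∑ᵢ yᵢ² · W`, since `yⱼ² ≤ lev U j` and every bucket carries light
leverage at most `W`. Hoeffding's inequality, via `cosh x ≤ exp (x² / 2)`, then gives `K_C = 2`.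
-/

section Rademacher

variable {ι : Type*} [Fintype ι]

lemma sgn_mul_sgn (a b : Bool) : sgn a * sgn b = sgn (a == b) := by
  cases a <;> cases b <;> norm_num [sgn]

lemma sum_exp_sum_mul_sgn_le [DecidableEq ι] (c : ι → ℝ) :
    ∑ σ : ι → Bool, exp (∑ i, c i * sgn (σ i)) ≤
      Fintype.card (ι → Bool) * exp ((∑ i, c i ^ 2) / 2) := by
  calc ∑ σ : ι → Bool, exp (∑ i, c i * sgn (σ i))
      = ∏ i, ∑ b : Bool, exp (c i * sgn b) := by
        rw [Fintype.prod_sum]; simp_rw [Real.exp_sum]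
    _ = ∏ i, 2 * cosh (c i) := by
        simp [sgn, cosh_eq, mul_div_cancel₀]
    _ ≤ ∏ i, 2 * exp (c i ^ 2 / 2) :=
        prod_le_prod (fun i _ => by positivity) fun i _ => by gcongr; exact cosh_le_exp_half_sq _
    _ = _ := by simp [prod_mul_distrib, ← Real.exp_sum, ← sum_div]

lemma card_sqrt_lt_sum_mul_sgn_le [DecidableEq ι] (c : ι → ℝ) {V L : ℝ}
    (hcV : ∑ i, c i ^ 2 ≤ V) (hL : 0 ≤ L) :
    (#{σ : ι → Bool | √(2 * V * L) < ∑ i, c i * sgn (σ i)} : ℝ) ≤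
      Fintype.card (ι → Bool) * exp (-L) := by
  have hc2 : 0 ≤ ∑ i, c i ^ 2 := sum_nonneg fun i _ => sq_nonneg (c i)
  rcases (hc2.trans hcV).eq_or_lt with hV | hV
  · have hc : ∀ i, c i = 0 := fun i => pow_eq_zero_iff two_ne_zero |>.1 <|
      (sum_eq_zero_iff_of_nonneg fun i _ => sq_nonneg (c i)).1 (by linarith) i (mem_univ i)
    rw [filter_eq_empty_iff.2 fun σ _ => by simp [hc, ← hV], card_empty, Nat.cast_zero]
    positivity
  -- Chernoff: Markov's inequality for `exp (l * ∑ i, c i * sgn (σ i))`, optimized at `l`.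
  set l := √(2 * L / V)
  have hl : l * √(2 * V * L) = 2 * L := by
    rw [← sqrt_mul (by positivity), show 2 * L / V * (2 * V * L) = (2 * L) ^ 2 by
      field_simp, sqrt_sq (by positivity)]
  have hmarkov : (#{σ : ι → Bool | √(2 * V * L) < ∑ i, c i * sgn (σ i)} : ℝ) * exp (2 * L) ≤
      ∑ σ : ι → Bool, exp (∑ i, l * c i * sgn (σ i)) := by
    rw [← nsmul_eq_mul, ← sum_const]
    refine (sum_le_sum fun σ hσ => exp_le_exp.2 ?_).trans
      (sum_le_sum_of_subset_of_nonneg (filter_subset _ _) fun _ _ _ => (exp_pos _).le)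
    simp_rw [mul_assoc, ← mul_sum, ← hl]
    exact mul_le_mul_of_nonneg_left (mem_filter.1 hσ).2.le (sqrt_nonneg _)
  have hmgf : ∑ σ : ι → Bool, exp (∑ i, l * c i * sgn (σ i)) ≤
      Fintype.card (ι → Bool) * exp L := by
    refine (sum_exp_sum_mul_sgn_le (fun i => l * c i)).trans ?_
    gcongr
    calc (∑ i, (l * c i) ^ 2) / 2 = l ^ 2 * (∑ i, c i ^ 2) / 2 := by simp [mul_pow, mul_sum]
      _ ≤ 2 * L / V * V / 2 := by rw [sq_sqrt (by positivity)]; gcongr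
      _ = L := by field_simp
  rw [show -L = L - 2 * L by ring, exp_sub, mul_div_assoc', le_div_iff₀ (exp_pos _)]
  linarith

lemma natCard_abs_sum_mul_sgn_le_sqrt_ge [DecidableEq ι] (c : ι → ℝ) {V L : ℝ}
    (hcV : ∑ i, c i ^ 2 ≤ V) (hL : 0 ≤ L) :
    (1 - 2 * exp (-L)) * Fintype.card (ι → Bool) ≤
      Nat.card {σ : ι → Bool // |∑ i, c i * sgn (σ i)| ≤ √(2 * V * L)} := by
  have hupper := card_sqrt_lt_sum_mul_sgn_le c hcV hL
  have hlower := card_sqrt_lt_sum_mul_sgn_le (-c) (by simpa using hcV) hL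
  simp only [Pi.neg_apply, neg_mul, sum_neg_distrib] at hlower
  have hcover : (univ : Finset (ι → Bool)) ⊆
      ({σ | |∑ i, c i * sgn (σ i)| ≤ √(2 * V * L)} : Finset (ι → Bool)) ∪
        ({σ | √(2 * V * L) < ∑ i, c i * sgn (σ i)} : Finset (ι → Bool)) ∪
        ({σ | √(2 * V * L) < -∑ i, c i * sgn (σ i)} : Finset (ι → Bool)) := by
    intro σ _
    simp only [mem_union, mem_filter, mem_univ, true_and]
    by_contra! h
    exact h.1.1.not_ge (abs_le.2 ⟨by linarith, h.1.2⟩)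
  have hcard := (card_le_card hcover).trans <|
    (card_union_le _ _).trans (add_le_add_left (card_union_le _ _) _)
  rw [card_univ] at hcard
  rw [Nat.card_eq_fintype_card, Fintype.card_subtype]
  have := (Nat.cast_le (α := ℝ)).2 hcard
  push_cast at this
  linarith

lemma natCard_sum_mul_sgn_mul_sgn_eq (c : ι → ℝ) (p : ι → ι)
    (hp : ∀ j, c j ≠ 0 → c (p j) = 0) (P : ℝ → Prop) :
    Nat.card {σ : ι → Bool // P (∑ j, c j * (sgn (σ j) * sgn (σ (p j))))} =
      Nat.card {σ : ι → Bool // P (∑ j, c j * sgn (σ j))} := by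
  classical
  -- `Φ` fixes `σ (p j)` whenever it changes `σ j`, hence is an involution.
  let Φ : (ι → Bool) → (ι → Bool) := fun σ j => if c j = 0 then σ j else (σ j == σ (p j))
  have hΦ : Function.Involutive Φ := by
    intro σ
    funext j
    by_cases hj : c j = 0
    · simp [Φ, hj]
    · simp [Φ, hj, hp j hj]
  have hsum : ∀ σ, ∑ j, c j * (sgn (σ j) * sgn (σ (p j))) = ∑ j, c j * sgn (Φ σ j) := by
    intro σ
    refine sum_congr rfl fun j _ => ?_
    by_cases hj : c j = 0
    · simp [hj]
    · simp [Φ, hj, sgn_mul_sgn]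
  exact Nat.card_congr (hΦ.toPerm.subtypeEquiv fun σ => by rw [hsum]; rfl)

end Rademacher

lemma sum_mul_eq_mul_sum_of_ne_zero_imp_eq {ι : Type*} {s : Finset ι} {g u : ι → ℝ} {a : ι}
    (hs : ∀ i ∈ s, u i ≠ 0 → i = a) : ∑ i ∈ s, g i * u i = g a * ∑ i ∈ s, u i := by
  rw [mul_sum]
  refine sum_congr rfl fun i hi => ?_
  rcases eq_or_ne (u i) 0 with hu | hu
  · simp [hu]
  · rw [hs i hi hu]

lemma sq_sum_eq_sum_sq_of_ne_zero_imp_eq {ι : Type*} {s : Finset ι} {u : ι → ℝ}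
    (hs : ∀ i ∈ s, ∀ k ∈ s, u i ≠ 0 → u k ≠ 0 → i = k) :
    (∑ i ∈ s, u i) ^ 2 = ∑ i ∈ s, u i ^ 2 := by
  rw [sq, sum_mul]
  refine sum_congr rfl fun i hi => ?_
  rcases eq_or_ne (u i) 0 with hu | hu
  · simp [hu]
  · rw [sum_eq_single_of_mem i hi fun k hk hki =>
      by_contra fun hk0 => hki (hs k hk i hi hk0 hu), sq]

lemma exists_partner {ι κ : Type*} {h : ι → κ} {u : ι → ℝ}
    (hu : Set.InjOn h (Function.support u)) :
    ∃ p : ι → ι, ∀ i j, u i ≠ 0 → h i = h j → p j = i := by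
  classical
  refine ⟨fun j => if hj : ∃ i, u i ≠ 0 ∧ h i = h j then hj.choose else j, fun i j hi hij => ?_⟩
  have hj : ∃ i, u i ≠ 0 ∧ h i = h j := ⟨i, hi, hij⟩
  simp only [dif_pos hj]
  exact hu hj.choose_spec.1 hi (hj.choose_spec.2.trans hij.symm)

lemma SE_mulVec_apply {n t : ℕ} (h : Fin n → Fin t) (σ : Fin n → Bool) (u : Fin n → ℝ)
    (a : Fin t) :
    (SE h σ *ᵥ u) a = ∑ i with h i = a, sgn (σ i) * u i := by
  simp [SE, mulVec, dotProduct, sum_filter]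

lemma sum_SE_mulVec_mul_SE_mulVec {n t : ℕ} (h : Fin n → Fin t) (σ : Fin n → Bool)
    (u v : Fin n → ℝ) :
    ∑ a, (SE h σ *ᵥ u) a * (SE h σ *ᵥ v) a =
      ∑ j, sgn (σ j) * v j * ∑ i with h i = h j, sgn (σ i) * u i := by
  simp_rw [SE_mulVec_apply]
  rw [← sum_fiberwise univ h]
  refine sum_congr rfl fun a _ => ?_
  rw [mul_sum]
  refine sum_congr rfl fun j hj => ?_
  rw [(mem_filter.1 hj).2]
  ring

section CrossCoeff

variable {ι κ : Type*} [Fintype ι] [DecidableEq κ]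

/-- With at most one nonzero entry of `u` per bucket, this is `v j * u (p j)` for the partner
`p j` of `j`. -/
def crossCoeff (h : ι → κ) (u v : ι → ℝ) (j : ι) : ℝ := v j * ∑ i with h i = h j, u i

variable {h : ι → κ} {u v : ι → ℝ} {p : ι → ι}

lemma crossCoeff_partner_eq_zero (hp : ∀ i j, u i ≠ 0 → h i = h j → p j = i)
    (huv : ∀ i, u i ≠ 0 → v i = 0) (j : ι) (hj : crossCoeff h u v j ≠ 0) :
    crossCoeff h u v (p j) = 0 := by
  obtain ⟨i, hi, hui⟩ := exists_ne_zero_of_sum_ne_zero (right_ne_zero_of_mul hj)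
  rw [crossCoeff, hp i j hui (mem_filter.1 hi).2, huv i hui, zero_mul]

lemma sum_crossCoeff_sq_le (hp : ∀ i j, u i ≠ 0 → h i = h j → p j = i) {W : ℝ}
    (hv : ∀ k, ∑ j with h j = k, v j ^ 2 ≤ W) :
    ∑ j, crossCoeff h u v j ^ 2 ≤ W * ∑ i, u i ^ 2 := by
  calc ∑ j, crossCoeff h u v j ^ 2 = ∑ j, ∑ i with h i = h j, v j ^ 2 * u i ^ 2 := by
        refine sum_congr rfl fun j _ => ?_
        rw [crossCoeff, mul_pow, sq_sum_eq_sum_sq_of_ne_zero_imp_eq, mul_sum]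
        intro i hi k hk hui huk
        rw [← hp i j hui (mem_filter.1 hi).2, hp k j huk (mem_filter.1 hk).2]
    _ = ∑ i, u i ^ 2 * ∑ j with h j = h i, v j ^ 2 := by
        simp_rw [mul_sum, sum_filter]
        rw [sum_comm]
        refine sum_congr rfl fun i _ => sum_congr rfl fun j _ => ?_
        by_cases hij : h i = h j
        · rw [if_pos hij, if_pos hij.symm, mul_comm]
        · rw [if_neg hij, if_neg (Ne.symm hij)]
    _ ≤ ∑ i, u i ^ 2 * W := sum_le_sum fun i _ => mul_le_mul_of_nonneg_left (hv _) (sq_nonneg _)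
    _ = W * ∑ i, u i ^ 2 := by rw [mul_sum]; simp_rw [mul_comm]

end CrossCoeff

lemma sum_SE_mulVec_mul_SE_mulVec_eq_sum_crossCoeff {n t : ℕ} {h : Fin n → Fin t}
    {u : Fin n → ℝ} {p : Fin n → Fin n} (hp : ∀ i j, u i ≠ 0 → h i = h j → p j = i)
    (σ : Fin n → Bool) (v : Fin n → ℝ) :
    ∑ a, (SE h σ *ᵥ u) a * (SE h σ *ᵥ v) a =
      ∑ j, crossCoeff h u v j * (sgn (σ j) * sgn (σ (p j))) := by
  rw [sum_SE_mulVec_mul_SE_mulVec]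
  refine sum_congr rfl fun j _ => ?_
  rw [sum_mul_eq_mul_sum_of_ne_zero_imp_eq (a := p j)
    fun i hi hui => (hp i j hui (mem_filter.1 hi).2).symm, crossCoeff]
  ring

theorem natCard_abs_cross_term_le_sqrt_ge {n t : ℕ} {h : Fin n → Fin t} {u v : Fin n → ℝ}
    (hu : Set.InjOn h (Function.support u)) (huv : ∀ i, u i ≠ 0 → v i = 0)
    (hu1 : ∑ i, u i ^ 2 ≤ 1) {W L : ℝ} (hW : 0 ≤ W) (hv : ∀ k, ∑ j with h j = k, v j ^ 2 ≤ W)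
    (hL : 0 ≤ L) :
    (1 - 2 * exp (-L)) * Fintype.card (Fin n → Bool) ≤
      Nat.card {σ : Fin n → Bool //
        |∑ a, (SE h σ *ᵥ u) a * (SE h σ *ᵥ v) a| ≤ √(2 * W * L)} := by
  obtain ⟨p, hp⟩ := exists_partner hu
  have hvar : ∑ j, crossCoeff h u v j ^ 2 ≤ W :=
    (sum_crossCoeff_sq_le hp hv).trans (mul_le_of_le_one_right hW hu1)
  simp_rw [sum_SE_mulVec_mul_SE_mulVec_eq_sum_crossCoeff hp]
  exact (natCard_abs_sum_mul_sgn_le_sqrt_ge _ hvar hL).trans_eq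
    (congrArg Nat.cast (natCard_sum_mul_sgn_mul_sgn_eq _ _ (crossCoeff_partner_eq_zero hp huv)
      fun x => |x| ≤ √(2 * W * L)).symm)

lemma sq_mulVec_apply_le_lev {n r : ℕ} (U : Matrix (Fin n) (Fin r) ℝ) (x : Fin r → ℝ)
    (i : Fin n) : (U *ᵥ x) i ^ 2 ≤ lev U i * sqnorm x :=
  sum_mul_sq_le_sq_mul_sq univ (U i) x

lemma sqnorm_mulVec_of_transpose_mul_self {n r : ℕ} {U : Matrix (Fin n) (Fin r) ℝ}
    (hU : Uᵀ * U = 1) (x : Fin r → ℝ) : sqnorm (U *ᵥ x) = sqnorm x := by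
  have hdot : ∀ {m : ℕ} (z : Fin m → ℝ), sqnorm z = z ⬝ᵥ z := fun z => by
    simp [sqnorm, dotProduct, sq]
  rw [hdot, hdot, dotProduct_mulVec, ← mulVec_transpose, mulVec_mulVec, hU, one_mulVec]

lemma sq_mulVec_apply_le_lev_of_sqnorm_eq_one {n r : ℕ} {U : Matrix (Fin n) (Fin r) ℝ}
    (hU : Uᵀ * U = 1) {x : Fin r → ℝ} (hx : sqnorm (U *ᵥ x) = 1) (i : Fin n) :
    (U *ᵥ x) i ^ 2 ≤ lev U i := by
  simpa [sqnorm_mulVec_of_transpose_mul_self hU x ▸ hx] using sq_mulVec_apply_le_lev U x i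

lemma sum_indicator_sq_le_sqnorm {ι : Type*} [Fintype ι] (S : Set ι) (y : ι → ℝ) :
    ∑ i, S.indicator y i ^ 2 ≤ sqnorm y := by
  classical
  refine sum_le_sum fun i _ => ?_
  simp only [Set.indicator_apply]
  split_ifs <;> simp [sq_nonneg]

lemma sum_sq_indicator_le_sum_indicator {ι κ : Type*} [Fintype ι] [DecidableEq κ]
    {P : ι → Prop} {y g : ι → ℝ} (hyg : ∀ i, y i ^ 2 ≤ g i) (h : ι → κ) (k : κ) :
    ∑ j with h j = k, Set.indicator {i | P i} y j ^ 2 ≤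
      ∑ j, Set.indicator {i | P i ∧ h i = k} g j := by
  classical
  rw [sum_filter]
  refine sum_le_sum fun j _ => ?_
  simp only [Set.indicator_apply, Set.mem_ofPred_eq]
  split_ifs <;> simp_all

lemma two_mul_exp_neg_two_mul_log_one_div_le {δ : ℝ} (hδ : 0 < δ) (hδe : δ ≤ 1 / exp 1) :
    2 * exp (-(2 * log (1 / δ))) ≤ δ := by
  rw [one_div, log_inv, mul_neg, neg_neg, show 2 * log δ = log (δ ^ 2) by rw [log_pow]; norm_num,
    exp_log (by positivity)]
  have := add_one_le_exp 1
  have : δ * exp 1 ≤ 1 := (le_div_iff₀ (exp_pos 1)).1 hδe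
  nlinarith

/-- **Cross-term bound.** There is an absolute constant `K_C` such that, for a hash
function `h` on which the events `E_h` (even hashing of light leverage mass) and
`E_B` (injectivity on heavy coordinates) hold, for any unit `y ∈ C(A)` and any
`δ_C ∈ (0, 1/e]`, with probability at least `1 − δ_C` over the random signs,
`|y_{1:(s−1)}ᵀ DΦᵀΦD y_{s:n}| ≤ K_C·√(W·log(1/δ_C))`. -/
theorem cross_term_bound :
    ∃ KC : ℝ, 0 < KC ∧
    ∀ (n d r t : ℕ) (A : Matrix (Fin n) (Fin d) ℝ) (U : Matrix (Fin n) (Fin r) ℝ),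
      A.rank = r → Uᵀ * U = 1 →
      (∀ y : Fin n → ℝ, y ∈ Set.range A.mulVec ↔ y ∈ Set.range U.mulVec) →
      (∀ i j : Fin n, i ≤ j → lev U j ≤ lev U i) →
    ∀ (δh T : ℝ), 0 < δh → 0 < T →
    ∀ s : ℕ,
      (∀ i : Fin n, (i : ℕ) < s → T < lev U i) →
      (∀ i : Fin n, s ≤ (i : ℕ) → lev U i ≤ T) →
    ∀ W : ℝ, W = T * Real.log (t / δh) + r / t →
    ∀ h : Fin n → Fin t,
      (∀ j : Fin t,
        (∑ i : Fin n,
          Set.indicator {i : Fin n | s ≤ (i : ℕ) ∧ h i = j} (lev U) i) ≤ W) →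
      Set.InjOn h {i : Fin n | (i : ℕ) < s} →
    ∀ y : Fin n → ℝ, y ∈ Set.range A.mulVec → sqnorm y = 1 →
    ∀ δC : ℝ, 0 < δC → δC ≤ 1 / Real.exp 1 →
    (1 - δC) * (Fintype.card (Fin n → Bool)) ≤
      Nat.card {σ : Fin n → Bool //
        |∑ a : Fin t,
            (SE h σ).mulVec (Set.indicator {i : Fin n | (i : ℕ) < s} y) a *
              (SE h σ).mulVec (Set.indicator {i : Fin n | s ≤ (i : ℕ)} y) a| ≤
          KC * Real.sqrt (W * Real.log (1 / δC))} := by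
  refine ⟨2, two_pos, ?_⟩
  intro n d r t A U _ hU hrange _ δh T _ _ s _ _ W _ h hbucket hinj y hy hy1 δC hδ hδe
  obtain ⟨x, rfl⟩ := (hrange y).1 hy
  have hv (k : Fin t) :
      ∑ j with h j = k, Set.indicator {i : Fin n | s ≤ (i : ℕ)} (U *ᵥ x) j ^ 2 ≤ W :=
    (sum_sq_indicator_le_sum_indicator (sq_mulVec_apply_le_lev_of_sqnorm_eq_one hU hy1) h k).trans
      (hbucket k)
  have hW : 0 ≤ W := by
    obtain ⟨i, -⟩ := exists_ne_zero_of_sum_ne_zero (hy1.trans_ne one_ne_zero)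
    exact (sum_nonneg fun _ _ => sq_nonneg _).trans (hv (h i))
  have huv (i : Fin n) (hi : Set.indicator {i : Fin n | (i : ℕ) < s} (U *ᵥ x) i ≠ 0) :
      Set.indicator {i : Fin n | s ≤ (i : ℕ)} (U *ᵥ x) i = 0 :=
    Set.indicator_of_notMem (by simpa using Set.mem_of_indicator_ne_zero hi) _
  have hL : 0 ≤ log (1 / δC) :=
    log_nonneg (one_le_one_div hδ (hδe.trans (div_le_one_of_le₀ (one_le_exp zero_le_one)
      (exp_pos 1).le)))
  have key := natCard_abs_cross_term_le_sqrt_ge (hinj.mono Set.support_indicator_subset) huv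
    ((sum_indicator_sq_le_sqnorm _ _).trans hy1.le) hW hv (L := 2 * log (1 / δC)) (by positivity)
  rw [show 2 * W * (2 * log (1 / δC)) = 2 ^ 2 * (W * log (1 / δC)) by ring,
    sqrt_mul (by norm_num), sqrt_sq (by norm_num)] at key
  refine le_trans ?_ key
  gcongr
  linarith [two_mul_exp_neg_two_mul_log_one_div_le hδ hδe]
end
end

section
/- (Few inter-group hash collisions.) Fix δ₁ ∈ (0,1) and a number of hash buckets t. For distinct j, j' ∈ [q], let E_{j,j'} be the event that the number of buckets m ∈ [t] containing both some index of G_j and some index of G_{j'} under h is at most n_j·n_{j'}·q²/(t·δ₁). Then Pr[∩_{j ≠ j'} E_{j,j'}] ≥ 1 − δ₁. -/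
/-!
A bucket shared by `G_j` and `G_{j'}` is witnessed by a colliding pair `(i, i') ∈ G_j × G_{j'}`.
The dyadic groups are disjoint, so each such pair collides with probability exactly `1/t`, and the
expected number of shared buckets is at most `n_j n_{j'} / t`. Markov's inequality with the factor
`q² / δ₁` makes each pair of groups fail with probability at most `δ₁ / q²`, and a union bound over
the fewer than `q²` ordered pairs `j ≠ j'` finishes the proof.
-/

open Matrix Finset Real

noncomputable section

/-- The dyadic leverage-score group `G_j` (here `j : ℕ` is the 0-based index, so it
corresponds to the paper's group `G_{j+1} = {i : 2^{−(j+1)} < u_i ≤ 2^{−j}}`). -/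
def grp {n r : ℕ} (U : Matrix (Fin n) (Fin r) ℝ) (j : ℕ) : Set (Fin n) :=
  {i | (2 : ℝ) ^ (-(j : ℤ) - 1) < lev U i ∧ lev U i ≤ (2 : ℝ) ^ (-(j : ℤ))}

theorem pairwise_disjoint_grp {n r : ℕ} (U : Matrix (Fin n) (Fin r) ℝ) :
    Pairwise (Function.onFun Disjoint (grp U)) := by
  intro j j' hjj'
  wlog hlt : j < j' generalizing j j'
  · exact (this hjj'.symm (by omega)).symm
  refine Set.disjoint_left.mpr fun i hi hi' => (hi'.2.trans ?_).not_gt hi.1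
  exact zpow_le_zpow_right₀ one_le_two (by omega)

section Hashing

variable {α β : Type*} [DecidableEq β]

theorem card_inter_image_le_card_collisions (h : α → β) (S S' : Finset α) :
    #(S.image h ∩ S'.image h) ≤ #{p ∈ S ×ˢ S' | h p.1 = h p.2} := by
  refine le_trans (card_le_card fun m hm => ?_) (card_image_le (f := fun p => h p.1))
  obtain ⟨⟨i, hi, rfl⟩, ⟨i', hi', hii'⟩⟩ := And.imp mem_image.mp mem_image.mp (mem_inter.mp hm)
  exact mem_image.mpr ⟨(i, i'), mem_filter.mpr ⟨mem_product.mpr ⟨hi, hi'⟩, hii'.symm⟩, rfl⟩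

variable [Fintype α] [DecidableEq α] [Fintype β]

/-- A function is determined by its value at `b` together with the function obtained by
overwriting that value with the value at `a`. -/
def subtypeApplyEqApplyProdEquiv {a b : α} (hab : a ≠ b) :
    {h : α → β // h a = h b} × β ≃ (α → β) where
  toFun p := Function.update p.1.1 b p.2
  invFun g := (⟨Function.update g b (g a), by simp [Function.update_of_ne hab]⟩, g b)
  left_inv := by
    rintro ⟨⟨h, hh⟩, c⟩
    ext x
    · by_cases hx : x = b
      · subst hx; simp [Function.update_of_ne hab, hh]
      · simp [Function.update_of_ne hx]
    · simp
  right_inv g := by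
    funext x
    by_cases hx : x = b
    · subst hx; simp
    · simp [Function.update_of_ne hx]

theorem card_filter_apply_eq_apply_mul_card {a b : α} (hab : a ≠ b) :
    #{h : α → β | h a = h b} * Fintype.card β = Fintype.card (α → β) := by
  simpa [Fintype.card_subtype] using
    Fintype.card_congr (subtypeApplyEqApplyProdEquiv (β := β) hab)

theorem sum_card_collisions_mul_card {S S' : Finset α} (hSS' : Disjoint S S') :
    (∑ h : α → β, #{p ∈ S ×ˢ S' | h p.1 = h p.2}) * Fintype.card β =
      #S * #S' * Fintype.card (α → β) := by
  have hne : ∀ p ∈ S ×ˢ S', p.1 ≠ p.2 := fun p hp heq =>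
    disjoint_left.mp hSS' (mem_product.mp hp).1 (heq ▸ (mem_product.mp hp).2)
  calc (∑ h : α → β, #{p ∈ S ×ˢ S' | h p.1 = h p.2}) * Fintype.card β
      = ∑ p ∈ S ×ˢ S', #{h : α → β | h p.1 = h p.2} * Fintype.card β := by
        simp only [card_filter, sum_comm (s := univ), sum_mul]
    _ = ∑ _p ∈ S ×ˢ S', Fintype.card (α → β) :=
        sum_congr rfl fun p hp => card_filter_apply_eq_apply_mul_card (hne p hp)
    _ = #S * #S' * Fintype.card (α → β) := by rw [sum_const, card_product, smul_eq_mul]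

theorem card_many_shared_buckets_mul_le [Nonempty β] {s s' : Set α} (hss' : Disjoint s s')
    (c : ℝ) :
    (#{h : α → β | s.ncard * s'.ncard * c / Fintype.card β < (h '' s ∩ h '' s').ncard} : ℝ) *
      c ≤ Fintype.card (α → β) := by
  classical
  set S := s.toFinset
  set S' := s'.toFinset
  have hshared (h : α → β) : (h '' s ∩ h '' s').ncard = #(S.image h ∩ S'.image h) := by
    rw [← Set.ncard_coe_finset]; simp [S, S']
  simp only [hshared, Set.ncard_eq_toFinset_card']
  set bad : Finset (α → β) :=
    {h : α → β | #S * #S' * c / Fintype.card β < #(S.image h ∩ S'.image h)}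
  rcases Nat.eq_zero_or_pos (#S * #S') with hSS | hSS
  · have hbad : bad = ∅ := filter_eq_empty_iff.mpr fun h _ => by
      rcases Nat.mul_eq_zero.mp hSS with hS | hS <;> simp [card_eq_zero.mp hS]
    simp [hbad]
  have hβ : (0 : ℝ) < Fintype.card β := by exact_mod_cast Fintype.card_pos
  have markov : (#bad : ℝ) * (#S * #S' * c / Fintype.card β) ≤
      ∑ h : α → β, (#{p ∈ S ×ˢ S' | h p.1 = h p.2} : ℝ) := by
    rw [← nsmul_eq_mul]
    refine (card_nsmul_le_sum bad _ _ fun h hh => (mem_filter.mp hh).2.le).trans ?_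
    refine (sum_le_sum_of_subset_of_nonneg (subset_univ bad) fun _ _ _ => by positivity).trans ?_
    exact sum_le_sum fun h _ => by exact_mod_cast card_inter_image_le_card_collisions h S S'
  have expected : (∑ h : α → β, (#{p ∈ S ×ˢ S' | h p.1 = h p.2} : ℝ)) * Fintype.card β =
      #S * #S' * Fintype.card (α → β) := by
    exact_mod_cast sum_card_collisions_mul_card (Set.disjoint_toFinset.mpr hss')
  have key : (#S * #S' : ℝ) * (#bad * c) ≤ #S * #S' * Fintype.card (α → β) := by
    rw [← expected]
    calc (#S * #S' : ℝ) * (#bad * c)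
        = #bad * (#S * #S' * c / Fintype.card β) * Fintype.card β := by field_simp
      _ ≤ _ := mul_le_mul_of_nonneg_right markov hβ.le
  exact le_of_mul_le_mul_left key (by exact_mod_cast hSS)

end Hashing

theorem card_sub_card_mul_le_natCard_forall {ι Ω : Type*} [Fintype Ω] (K : Finset ι)
    (good : ι → Ω → Prop) [∀ k, DecidablePred (good k)] (ε : ℝ)
    (hK : ∀ k ∈ K, (#{ω | ¬good k ω} : ℝ) ≤ ε) :
    Fintype.card Ω - #K * ε ≤ Nat.card {ω // ∀ k ∈ K, good k ω} := by
  classical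
  have hsplit := card_filter_add_card_filter_not (s := univ) (fun ω => ∀ k ∈ K, good k ω)
  have hunion : (#{ω | ¬∀ k ∈ K, good k ω} : ℝ) ≤ #K * ε := by
    have hcover : ({ω | ¬∀ k ∈ K, good k ω} : Finset Ω) = K.biUnion fun k => {ω | ¬good k ω} := by
      ext ω; simp
    rw [hcover]
    calc (#(K.biUnion fun k => {ω | ¬good k ω}) : ℝ) ≤ ∑ k ∈ K, (#{ω | ¬good k ω} : ℝ) := by
          exact_mod_cast card_biUnion_le
      _ ≤ #K * ε := by simpa using sum_le_sum hK
  rw [Nat.card_eq_fintype_card, Fintype.card_subtype, ← card_univ, ← hsplit]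
  push_cast
  linarith

theorem card_offDiag_mul_div_sq_le {ι : Type*} [DecidableEq ι] (s : Finset ι) {x : ℝ}
    (hx : 0 ≤ x) : #s.offDiag * (x / #s ^ 2) ≤ x := by
  rcases s.eq_empty_or_nonempty with rfl | hs
  · simpa using hx
  have hoff : (#s.offDiag : ℝ) ≤ #s ^ 2 := by
    rw [offDiag_card, sq]
    exact_mod_cast Nat.sub_le _ _
  calc _ ≤ (#s : ℝ) ^ 2 * (x / #s ^ 2) := by gcongr
    _ = x := mul_div_cancel₀ x (by positivity)

theorem few_inter_group_collisions_general
    (n r t q : ℕ) (ht : 0 < t)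
    (U : Matrix (Fin n) (Fin r) ℝ)
    (δ₁ : ℝ) (hδ : 0 < δ₁) :
    (1 - δ₁) * (Fintype.card (Fin n → Fin t)) ≤
      Nat.card {h : Fin n → Fin t //
        ∀ j j' : Fin q, j ≠ j' →
          (Nat.card {m : Fin t //
              (∃ i ∈ grp U (j : ℕ), h i = m) ∧ (∃ i' ∈ grp U (j' : ℕ), h i' = m)} : ℝ) ≤
            (grp U (j : ℕ)).ncard * (grp U (j' : ℕ)).ncard * q ^ 2 / (t * δ₁)} := by
  classical
  have : Nonempty (Fin t) := ⟨⟨0, ht⟩⟩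
  set N := Fintype.card (Fin n → Fin t)
  have hpair : ∀ p ∈ (univ : Finset (Fin q)).offDiag,
      (#{h : Fin n → Fin t | ¬((grp U p.1).image h ∩ (grp U p.2).image h).ncard ≤
        (grp U p.1).ncard * (grp U p.2).ncard * q ^ 2 / (t * δ₁)} : ℝ) ≤ δ₁ * N / q ^ 2 := by
    rintro ⟨j, j'⟩ hjj'
    have hc := card_many_shared_buckets_mul_le (β := Fin t)
      (pairwise_disjoint_grp U (Fin.val_injective.ne (mem_offDiag.mp hjj').2.2)) (q ^ 2 / δ₁)
    have hθ (a : ℝ) : a * q ^ 2 / (t * δ₁) = a * (q ^ 2 / δ₁) / t := by ring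
    simp only [Fintype.card_fin, not_le, hθ] at hc ⊢
    have hq : (0 : ℝ) < q ^ 2 / δ₁ := by have := j.pos; positivity
    rw [← le_div_iff₀ hq] at hc
    exact hc.trans_eq (by rw [div_div_eq_mul_div, mul_comm])
  calc (1 - δ₁) * (N : ℝ)
      ≤ N - #(univ : Finset (Fin q)).offDiag * (δ₁ * N / q ^ 2) := by
        have := card_offDiag_mul_div_sq_le (univ : Finset (Fin q)) (x := δ₁ * N) (by positivity)
        simp only [card_univ, Fintype.card_fin] at this
        linarith
    _ ≤ _ := card_sub_card_mul_le_natCard_forall _ _ _ hpair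
    _ = _ := by
      congr 1
      exact Nat.card_congr (Equiv.subtypeEquivRight fun h => by
        simp only [mem_offDiag, mem_univ, true_and, Prod.forall]; rfl)

/-- **Few inter-group hash collisions.** With probability at least `1 − δ₁` over a
uniformly random `h : [n] → [t]`, for every pair of distinct groups `G_j, G_{j'}`,
the number of buckets containing indices of both groups is at most
`n_j·n_{j'}·q²/(t·δ₁)`. -/
theorem few_inter_group_collisions
    (n d r t q : ℕ) (ht : 0 < t)
    (A : Matrix (Fin n) (Fin d) ℝ) (U : Matrix (Fin n) (Fin r) ℝ)
    (hrank : A.rank = r) (horth : Uᵀ * U = 1)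
    (hspan : ∀ y : Fin n → ℝ, y ∈ Set.range A.mulVec ↔ y ∈ Set.range U.mulVec)
    (T : ℝ) (hT : 0 < T) (hq : q = ⌈Real.logb 2 (1 / T)⌉₊)
    (δ₁ : ℝ) (hδ : 0 < δ₁) (hδ' : δ₁ < 1) :
    (1 - δ₁) * (Fintype.card (Fin n → Fin t)) ≤
      Nat.card {h : Fin n → Fin t //
        ∀ j j' : Fin q, j ≠ j' →
          (Nat.card {m : Fin t //
              (∃ i ∈ grp U (j : ℕ), h i = m) ∧ (∃ i' ∈ grp U (j' : ℕ), h i' = m)} : ℝ) ≤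
            (grp U (j : ℕ)).ncard * (grp U (j' : ℕ)).ncard * q ^ 2 / (t * δ₁)} :=
  few_inter_group_collisions_general n r t q ht U δ₁ hδ
end
end
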